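/- arXiv:1901.05751 — 3 statements merged into one kernel-verified Lean document; each statement's English description precedes it below -/
import Mathlib

section
/- Let 0 < β < 2 and define on [1, 2/β] the affine functions f₄(s) = βs - 2, f₃(s) = s·β²/(β+2), f₁₁(s) = 2 - s(2-β), f₁₂(s) = (2 - sβ(2-β))/(β+1), and F(s) = min(f₃(s), f₁₁(s), f₁₂(s)). Then the maximum of F over s ∈ [1, 2/β) equals β²/2 if 0 < β < 2(√2 - 1), equals 2β/(β+4) if 2(√2 - 1) ≤ β < √5 - 1, and equals (β² - 2β + 2)/(β+1) if √5 - 1 ≤ β < 2. -/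
set_option maxHeartbeats 1600000 in
/-- The maximum of `F = min(f₃, f₁₁, f₁₂)` over `[1, 2/β)` (Lemma `minF` of the paper). -/
theorem maximum_of_F (β : ℝ) (hβ : 0 < β) (hβ2 : β < 2)
    (f₃ f₁₁ f₁₂ F : ℝ → ℝ)
    (hf₃ : ∀ s, f₃ s = s * β ^ 2 / (β + 2))
    (hf₁₁ : ∀ s, f₁₁ s = 2 - s * (2 - β))
    (hf₁₂ : ∀ s, f₁₂ s = (2 - s * β * (2 - β)) / (β + 1))
    (hF : ∀ s, F s = min (f₃ s) (min (f₁₁ s) (f₁₂ s))) :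
    IsGreatest (F '' Set.Ico 1 (2 / β))
      (if β < 2 * (Real.sqrt 2 - 1) then β ^ 2 / 2
       else if β < Real.sqrt 5 - 1 then 2 * β / (β + 4)
       else (β ^ 2 - 2 * β + 2) / (β + 1)) := by
  have hb2 : (0:ℝ) < β + 2 := by linarith
  have hb1 : (0:ℝ) < β + 1 := by linarith
  have hb4 : (0:ℝ) < β + 4 := by linarith
  have h2mb : (0:ℝ) < 2 - β := by linarith
  have hs2 : Real.sqrt 2 ^ 2 = 2 := Real.sq_sqrt (by norm_num)
  have hs5 : Real.sqrt 5 ^ 2 = 5 := Real.sq_sqrt (by norm_num)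
  have hs2n : 0 ≤ Real.sqrt 2 := Real.sqrt_nonneg 2
  have hs5n : 0 ≤ Real.sqrt 5 := Real.sqrt_nonneg 5
  split_ifs with hc1 hc2
  · -- regime 1 : β² + 4β - 4 < 0
    have hk : β ^ 2 + 4 * β - 4 < 0 := by nlinarith [hs2, hs2n, hc1]
    constructor
    · refine ⟨(β + 2) / 2, ⟨by linarith, ?_⟩, ?_⟩
      · rw [lt_div_iff₀ hβ]; nlinarith
      · rw [hF, hf₃, hf₁₁, hf₁₂]
        have e1 : (β + 2) / 2 * β ^ 2 / (β + 2) = β ^ 2 / 2 := by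
          field_simp
        have e2 : 2 - (β + 2) / 2 * (2 - β) = β ^ 2 / 2 := by ring
        have e3 : β ^ 2 / 2 ≤ (2 - (β + 2) / 2 * β * (2 - β)) / (β + 1) := by
          rw [le_div_iff₀ hb1]; nlinarith
        rw [e1, e2, min_eq_left e3, min_self]
    · rintro x ⟨s, ⟨hs1, hsu⟩, rfl⟩
      rw [hF]
      rcases le_total s ((β + 2) / 2) with h | h
      · refine le_trans (min_le_left _ _) ?_
        rw [hf₃, div_le_iff₀ hb2]
        nlinarith [sq_nonneg β]
      · refine le_trans (le_trans (min_le_right _ _) (min_le_left _ _)) ?_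
        rw [hf₁₁]; nlinarith
  · -- regime 2 : β² + 4β - 4 ≥ 0 and β² + 2β - 4 < 0
    have hk1 : 0 ≤ β ^ 2 + 4 * β - 4 := by
      push_neg at hc1; nlinarith [hs2, hs2n, hc1]
    have hk2 : β ^ 2 + 2 * β - 4 < 0 := by nlinarith [hs5, hs5n, hc2]
    have hd : (0:ℝ) < β * (β + 4) := by positivity
    set s₀ : ℝ := 2 * (β + 2) / (β * (β + 4)) with hs₀def
    have hs₀ : s₀ * (β * (β + 4)) = 2 * (β + 2) := by
      rw [hs₀def]; field_simp
    constructor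
    · refine ⟨s₀, ⟨?_, ?_⟩, ?_⟩
      · rw [hs₀def, le_div_iff₀ hd]; nlinarith
      · rw [hs₀def, div_lt_div_iff₀ hd hβ]; nlinarith
      · rw [hF, hf₃, hf₁₁, hf₁₂]
        have e1 : s₀ * β ^ 2 / (β + 2) = 2 * β / (β + 4) := by
          rw [hs₀def]; field_simp
        have e3 : (2 - s₀ * β * (2 - β)) / (β + 1) = 2 * β / (β + 4) := by
          rw [hs₀def, div_eq_div_iff hb1.ne' hb4.ne']; field_simp; ring
        have e2 : 2 * β / (β + 4) ≤ 2 - s₀ * (2 - β) := by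
          rw [div_le_iff₀ hb4]
          nlinarith [hs₀, h2mb, hβ, hk1]
        rw [e1, e3, min_eq_right e2, min_self]
    · rintro x ⟨s, ⟨hs1, hsu⟩, rfl⟩
      rw [hF]
      rcases le_total s s₀ with h | h
      · refine le_trans (min_le_left _ _) ?_
        rw [hf₃, div_le_div_iff₀ hb2 hb4]
        nlinarith [mul_le_mul_of_nonneg_right h hd.le, hs₀, hβ]
      · refine le_trans (le_trans (min_le_right _ _) (min_le_right _ _)) ?_
        rw [hf₁₂, div_le_div_iff₀ hb1 hb4]
        nlinarith [mul_le_mul_of_nonneg_right h hd.le, hs₀, h2mb]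
  · -- regime 3 : β² + 2β - 4 ≥ 0
    have hk2 : 0 ≤ β ^ 2 + 2 * β - 4 := by
      push_neg at hc2
      have h1 : (0:ℝ) ≤ β + 1 - Real.sqrt 5 := by linarith
      have h2 : (0:ℝ) ≤ β + 1 + Real.sqrt 5 := by linarith
      nlinarith [mul_nonneg h1 h2, hs5]
    constructor
    · refine ⟨1, ⟨le_refl 1, by rw [lt_div_iff₀ hβ]; linarith⟩, ?_⟩
      rw [hF, hf₃, hf₁₁, hf₁₂]
      have hbc : (2 - 1 * β * (2 - β)) / (β + 1) ≤ 2 - 1 * (2 - β) := by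
        rw [div_le_iff₀ hb1]; nlinarith
      have hac : (2 - 1 * β * (2 - β)) / (β + 1) ≤ 1 * β ^ 2 / (β + 2) := by
        rw [div_le_div_iff₀ hb1 hb2]; nlinarith
      rw [min_eq_right hbc, min_eq_right hac]
      congr 1; ring
    · rintro x ⟨s, ⟨hs1, hsu⟩, rfl⟩
      rw [hF]
      refine le_trans (le_trans (min_le_right _ _) (min_le_right _ _)) ?_
      rw [hf₁₂, div_le_div_iff₀ hb1 hb1]
      nlinarith [mul_nonneg (mul_nonneg (sub_nonneg.mpr hs1) hβ.le) h2mb.le, hb1]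
end

section
/- Let α, β, s be real numbers with 0 ≤ 2α < 3, β ∈ (0,2], s ≥ 1, D = 1 - 2α, u(s) = (βs - D)/2. Assume u(s) < 1 and 2κ < u(s) + 1. Then for every Ω ≥ 1 and every p ∈ ℝ³, ∫_{ℝ³} Ω^s · |k|^{-2α - βs} / ((|p - k|² + Ω)^{2(1-κ)}) dk ≤ C · Ω^{2(κ - (1 + u(s) - s)/2)} for a finite constant C independent of p and Ω. -/
/-!
Substituting `k = √Ω • y` turns the integral into `Ω ^ (s + (3 - a) / 2 - b)` times
`∫ ‖y‖ ^ (-a) / (‖q - y‖ ^ 2 + 1) ^ b`, where `a = 2α + βs`, `b = 2(1 - κ)` and `q = p / √Ω`,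
so it suffices to bound the latter uniformly in `q`. Its integrand is dominated by `‖y‖ ^ (-a)`
on the unit ball, integrable there since `a < 3`, and off the ball by a multiple of
`(1 + ‖y‖) ^ (-(a + 2b)) + (1 + ‖y - q‖) ^ (-(a + 2b))`, integrable since `a + 2b > 3`, with an
integral independent of `q` by translation invariance.
-/

open MeasureTheory Metric Module Real

lemma rpow_neg_div_rpow_le {a b c c' A D T : ℝ} (ha : 0 ≤ a) (hb : 0 ≤ b) (hT : 0 < T)
    (hc : 0 < c) (hc' : 0 < c') (hA : T ≤ c * A) (hD : T ^ 2 ≤ c' * D) :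
    A ^ (-a) / D ^ b ≤ c ^ a * c' ^ b * T ^ (-(a + 2 * b)) := by
  have hA0 : 0 < A := pos_of_mul_pos_right (hT.trans_le hA) hc.le
  have hD0 : 0 < D := pos_of_mul_pos_right ((pow_pos hT 2).trans_le hD) hc'.le
  have hAinv : A⁻¹ ≤ c * T⁻¹ := by
    rw [inv_le_comm₀ hA0 (by positivity), mul_inv, inv_inv]
    rwa [inv_mul_le_iff₀ hc]
  have hDinv : D⁻¹ ≤ c' * (T ^ 2)⁻¹ := by
    rw [inv_le_comm₀ hD0 (by positivity), mul_inv, inv_inv]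
    rwa [inv_mul_le_iff₀ hc']
  calc A ^ (-a) / D ^ b = A⁻¹ ^ a * D⁻¹ ^ b := by
        rw [rpow_neg hA0.le, inv_rpow hA0.le, inv_rpow hD0.le, div_eq_mul_inv]
    _ ≤ (c * T⁻¹) ^ a * (c' * (T ^ 2)⁻¹) ^ b := by gcongr
    _ = c ^ a * c' ^ b * T ^ (-(a + 2 * b)) := by
        have hT' : 0 < T⁻¹ := inv_pos.mpr hT
        rw [mul_rpow hc.le hT'.le, mul_rpow hc'.le (by positivity), ← inv_pow, ← rpow_natCast,
          ← rpow_mul hT'.le, rpow_neg hT.le, ← inv_rpow hT.le, Nat.cast_ofNat, rpow_add hT']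
        ring

lemma norm_rpow_neg_div_sq_add_one_le {E : Type*} [NormedAddCommGroup E] {a b : ℝ}
    (ha : 0 ≤ a) (hb : 0 ≤ b) (q y : E) :
    ‖y‖ ^ (-a) / (‖q - y‖ ^ 2 + 1) ^ b ≤
      (ball (0 : E) 1).indicator (fun z ↦ ‖z‖ ^ (-a)) y +
        2 ^ a * 8 ^ b * ((1 + ‖y‖) ^ (-(a + 2 * b)) + (1 + ‖y - q‖) ^ (-(a + 2 * b))) := by
  rcases lt_or_ge ‖y‖ 1 with hy | hy
  · rw [Set.indicator_of_mem (mem_ball_zero_iff.mpr hy)]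
    have : ‖y‖ ^ (-a) / (‖q - y‖ ^ 2 + 1) ^ b ≤ ‖y‖ ^ (-a) :=
      div_le_self (by positivity) (one_le_rpow (le_add_of_nonneg_left (by positivity)) hb)
    exact this.trans (le_add_of_nonneg_right (by positivity))
  rw [Set.indicator_of_notMem (by simpa using hy), zero_add, norm_sub_rev]
  have hyq := norm_nonneg (y - q)
  rw [mul_add]
  -- If `‖y‖ ≤ 2‖y - q‖` the denominator controls `(1 + ‖y‖)²`; otherwise `‖y‖` controls
  -- `1 + ‖y - q‖`.
  rcases le_or_gt ‖y‖ (2 * ‖y - q‖) with hq | hq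
  · have := rpow_neg_div_rpow_le ha hb (by positivity : 0 < 1 + ‖y‖) two_pos
      (by norm_num : (0:ℝ) < 8) (by linarith : 1 + ‖y‖ ≤ 2 * ‖y‖)
      (by nlinarith : (1 + ‖y‖) ^ 2 ≤ 8 * (‖y - q‖ ^ 2 + 1))
    exact this.trans (le_add_of_nonneg_right (by positivity))
  · have := rpow_neg_div_rpow_le ha hb (by positivity : 0 < 1 + ‖y - q‖) two_pos
      (by norm_num : (0:ℝ) < 8) (by linarith : 1 + ‖y - q‖ ≤ 2 * ‖y‖)
      (by nlinarith : (1 + ‖y - q‖) ^ 2 ≤ 8 * (‖y - q‖ ^ 2 + 1))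
    exact this.trans (le_add_of_nonneg_left (by positivity))

section HaarMeasure

variable {E : Type*} [NormedAddCommGroup E] [NormedSpace ℝ E] [FiniteDimensional ℝ E]
  [MeasurableSpace E] [BorelSpace E] {μ : Measure E} [μ.IsAddHaarMeasure]

theorem integrable_indicator_ball_norm_rpow_neg {a : ℝ} (ha : 0 ≤ a) (had : a < finrank ℝ E) :
    Integrable ((ball (0 : E) 1).indicator (fun z ↦ ‖z‖ ^ (-a))) μ := by
  have hd : 1 ≤ finrank ℝ E := by exact_mod_cast (ha.trans_lt had)
  refine (integrable_indicator_iff measurableSet_ball).2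
    (integrableOn_ball_of_norm_le_rpow (C := 1) hd had (ae_of_all _ fun z ↦ ?_) ?_)
  · rw [one_mul, Real.norm_of_nonneg (by positivity)]
  · exact (by fun_prop : Measurable fun z : E ↦ ‖z‖ ^ (-a)).aestronglyMeasurable

theorem exists_integral_norm_rpow_neg_div_sq_add_one_le {a b : ℝ} (ha : 0 ≤ a)
    (had : a < finrank ℝ E) (hdab : finrank ℝ E < a + 2 * b) :
    ∃ C, 0 ≤ C ∧ ∀ q : E, ∫ y, ‖y‖ ^ (-a) / (‖q - y‖ ^ 2 + 1) ^ b ∂μ ≤ C := by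
  have hb : 0 ≤ b := by linarith
  set g : E → ℝ := (ball (0 : E) 1).indicator (fun z ↦ ‖z‖ ^ (-a))
  set ℓ : E → ℝ := fun z ↦ (1 + ‖z‖) ^ (-(a + 2 * b))
  set K : ℝ := 2 ^ a * 8 ^ b
  have hg : Integrable g μ := integrable_indicator_ball_norm_rpow_neg ha had
  have hℓ : Integrable ℓ μ := integrable_one_add_norm hdab
  have hg0 : 0 ≤ ∫ y, g y ∂μ := integral_nonneg (Set.indicator_nonneg fun z _ ↦ by positivity)
  have hℓ0 : 0 ≤ ∫ y, ℓ y ∂μ := integral_nonneg fun y ↦ by positivity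
  refine ⟨(∫ y, g y ∂μ) + K * (2 * ∫ y, ℓ y ∂μ), by positivity, fun q ↦ ?_⟩
  have hℓq : Integrable (fun y ↦ ℓ y + ℓ (y - q)) μ := hℓ.add (hℓ.comp_sub_right q)
  calc ∫ y, ‖y‖ ^ (-a) / (‖q - y‖ ^ 2 + 1) ^ b ∂μ
      ≤ ∫ y, g y + K * (ℓ y + ℓ (y - q)) ∂μ :=
        integral_mono_of_nonneg (ae_of_all _ fun y ↦ by positivity)
          (hg.add (hℓq.const_mul K))
          (ae_of_all _ (norm_rpow_neg_div_sq_add_one_le ha hb q))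
    _ = (∫ y, g y ∂μ) + K * (2 * ∫ y, ℓ y ∂μ) := by
        rw [integral_add hg (hℓq.const_mul K), integral_const_mul,
          integral_add hℓ (hℓ.comp_sub_right q), integral_sub_right_eq_self, two_mul]

theorem integral_norm_rpow_neg_div_sq_add_sq {a b r : ℝ} (hr : 0 < r) (p : E) :
    ∫ k, ‖k‖ ^ (-a) / (‖p - k‖ ^ 2 + r ^ 2) ^ b ∂μ =
      r ^ ((finrank ℝ E : ℝ) - a - 2 * b) * ∫ y, ‖y‖ ^ (-a) / (‖r⁻¹ • p - y‖ ^ 2 + 1) ^ b ∂μ := by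
  set f : E → ℝ := fun y ↦ ‖y‖ ^ (-a) / (‖r⁻¹ • p - y‖ ^ 2 + 1) ^ b
  have hscale : ∀ k : E,
      ‖k‖ ^ (-a) / (‖p - k‖ ^ 2 + r ^ 2) ^ b = r ^ (-(a + 2 * b)) * f (r⁻¹ • k) := by
    intro k
    have hsq : ‖r⁻¹ • p - r⁻¹ • k‖ ^ 2 + 1 = (r ^ 2)⁻¹ * (‖p - k‖ ^ 2 + r ^ 2) := by
      rw [← smul_sub, norm_smul, Real.norm_of_nonneg (inv_nonneg.2 hr.le)]
      field_simp
    simp only [f, hsq, norm_smul, Real.norm_of_nonneg (inv_nonneg.2 hr.le)]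
    rw [mul_rpow (by positivity) (by positivity), mul_rpow (by positivity) (by positivity)]
    have hr2 : (r ^ 2) ^ b = r ^ (2 * b) := by
      rw [← rpow_natCast, ← rpow_mul hr.le, Nat.cast_ofNat]
    rw [inv_rpow hr.le, ← rpow_neg hr.le, neg_neg, inv_rpow (by positivity), hr2, neg_add,
      rpow_add hr, rpow_neg hr.le, rpow_neg hr.le]
    field_simp
  simp_rw [hscale]
  rw [integral_const_mul, Measure.integral_comp_inv_smul_of_nonneg μ f hr.le, smul_eq_mul,
    ← mul_assoc, ← rpow_natCast, ← rpow_add hr]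
  ring_nf

end HaarMeasure

theorem offdiagonal_integral_scaling_general (α β s κ : ℝ)
    (hα0 : 0 ≤ 2 * α) (hβ : 0 < β) (hs : 1 ≤ s)
    (hu : (β * s - (1 - 2 * α)) / 2 < 1)
    (hκ : 2 * κ < (β * s - (1 - 2 * α)) / 2 + 1) :
    ∃ C : ℝ, 0 ≤ C ∧ ∀ Ω : ℝ, 1 ≤ Ω → ∀ p : EuclideanSpace ℝ (Fin 3),
      (∫ k : EuclideanSpace ℝ (Fin 3),
          Ω ^ s * ‖k‖ ^ (-(2 * α + β * s)) / (‖p - k‖ ^ 2 + Ω) ^ (2 * (1 - κ)))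
        ≤ C * Ω ^ (2 * (κ - (1 + (β * s - (1 - 2 * α)) / 2 - s) / 2)) := by
  have hβs : 0 < β * s := by positivity
  obtain ⟨C, hC0, hC⟩ := exists_integral_norm_rpow_neg_div_sq_add_one_le
    (μ := (volume : Measure (EuclideanSpace ℝ (Fin 3))))
    (a := 2 * α + β * s) (b := 2 * (1 - κ))
    (by linarith) (by rw [finrank_euclideanSpace_fin]; push_cast; linarith)
    (by rw [finrank_euclideanSpace_fin]; push_cast; linarith)
  refine ⟨C, hC0, fun Ω hΩ p ↦ ?_⟩
  have hΩ0 : 0 < Ω := one_pos.trans_le hΩ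
  have hr : 0 < √Ω := sqrt_pos.2 hΩ0
  calc (∫ k : EuclideanSpace ℝ (Fin 3),
          Ω ^ s * ‖k‖ ^ (-(2 * α + β * s)) / (‖p - k‖ ^ 2 + Ω) ^ (2 * (1 - κ)))
      = Ω ^ s * ∫ k : EuclideanSpace ℝ (Fin 3),
          ‖k‖ ^ (-(2 * α + β * s)) / (‖p - k‖ ^ 2 + √Ω ^ 2) ^ (2 * (1 - κ)) := by
        simp_rw [mul_div_assoc, sq_sqrt hΩ0.le, integral_const_mul]
    _ ≤ Ω ^ s * (√Ω ^ (3 - (2 * α + β * s) - 2 * (2 * (1 - κ))) * C) := by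
        rw [integral_norm_rpow_neg_div_sq_add_sq hr, finrank_euclideanSpace_fin, Nat.cast_ofNat]
        gcongr
        exact hC _
    _ = C * Ω ^ (2 * (κ - (1 + (β * s - (1 - 2 * α)) / 2 - s) / 2)) := by
        rw [sqrt_eq_rpow, ← rpow_mul hΩ0.le, ← mul_assoc, ← rpow_add hΩ0, mul_comm]
        ring_nf

/-- Scaling bound for the off-diagonal integral
`∫ Ωˢ |k|^{-2α-βs} (|p-k|² + Ω)^{-2(1-κ)} dk ≤ C·Ω^{2(κ - (1 + u(s) - s)/2)}`
with `u(s) = (βs - D)/2`, `D = 1 - 2α`. -/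
theorem offdiagonal_integral_scaling (α β s κ : ℝ)
    (hα0 : 0 ≤ 2 * α) (hα : 2 * α < 3) (hβ : 0 < β) (hβ2 : β ≤ 2) (hs : 1 ≤ s)
    (hu : (β * s - (1 - 2 * α)) / 2 < 1)
    (hκ : 2 * κ < (β * s - (1 - 2 * α)) / 2 + 1) :
    ∃ C : ℝ, 0 ≤ C ∧ ∀ Ω : ℝ, 1 ≤ Ω → ∀ p : EuclideanSpace ℝ (Fin 3),
      (∫ k : EuclideanSpace ℝ (Fin 3),
          Ω ^ s * ‖k‖ ^ (-(2 * α + β * s)) / (‖p - k‖ ^ 2 + Ω) ^ (2 * (1 - κ)))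
        ≤ C * Ω ^ (2 * (κ - (1 + (β * s - (1 - 2 * α)) / 2 - s) / 2)) :=
  offdiagonal_integral_scaling_general α β s κ hα0 hβ hs hu hκ
end

section
/- Let α ∈ [0, 3/2), β ∈ (0, 2], m ≥ 0, κ ≥ (2-D)/4 where D = 1 - 2α, and C > 0. Then for every fixed p ∈ ℝ³ the integral ∫_{ℝ³} (p-k)^{4κ} / ((1 + |k|^α)² · ((p-k)² + |k|^β + m + C)²) dk diverges (equals +∞). -/
open MeasureTheory Metric
open scoped ENNReal

local notation "E3" => EuclideanSpace ℝ (Fin 3)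

lemma aux_div (c R : ℝ) (hc : 0 < c) (hR : 1 ≤ R) :
    ∫⁻ k : EuclideanSpace ℝ (Fin 3) in {k | R ≤ ‖k‖},
      ENNReal.ofReal (c * ‖k‖ ^ (-3 : ℝ)) = ⊤ := by
  have hR0 : (0:ℝ) < R := lt_of_lt_of_le one_pos hR
  set V := volume (ball (0 : E3) 1) with hV
  have hV0 : V ≠ 0 := (measure_ball_pos _ _ one_pos).ne'
  have hVtop : V ≠ ⊤ := measure_ball_lt_top.ne
  set a : ℕ → ℝ := fun j => R * 2 ^ j with ha
  have ha_pos : ∀ j, 0 < a j := fun j => by positivity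
  have ha_mono : StrictMono a := by
    intro i j hij
    dsimp only [a]
    have h2 : (2:ℝ) ^ i < 2 ^ j := by gcongr <;> norm_num
    exact (mul_lt_mul_iff_right₀ hR0).2 h2
  set A : ℕ → Set E3 := fun j => ball (0:E3) (a (j+1)) \ ball 0 (a j) with hA
  have hAm : ∀ j, MeasurableSet (A j) := fun j => measurableSet_ball.diff measurableSet_ball
  have hAnorm : ∀ j, ∀ x ∈ A j, a j ≤ ‖x‖ ∧ ‖x‖ < a (j+1) := by
    intro j x hx
    obtain ⟨h1, h2⟩ := hx
    exact ⟨not_lt.1 (by simpa [mem_ball_zero_iff] using h2),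
      by simpa [mem_ball_zero_iff] using h1⟩
  have hdisj : Pairwise (Function.onFun Disjoint A) := by
    have key : ∀ i j, i < j → Disjoint (A i) (A j) := by
      intro i j hij
      refine Set.disjoint_left.2 fun x hxi hxj => ?_
      have h1 := (hAnorm i x hxi).2
      have h2 := (hAnorm j x hxj).1
      have h3 : a (i+1) ≤ a j := ha_mono.monotone hij
      linarith
    intro i j hij
    rcases hij.lt_or_gt with h | h
    · exact key i j h
    · exact (key j i h).symm
  have hsub : (⋃ j, A j) ⊆ {k : E3 | R ≤ ‖k‖} := by
    intro x hx
    obtain ⟨j, hj⟩ := Set.mem_iUnion.1 hx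
    have h1 := (hAnorm j x hj).1
    have hRa : R ≤ a j := by
      have h2 : (1:ℝ) ≤ 2 ^ j := one_le_pow₀ (by norm_num)
      calc R = R * 1 := by ring
        _ ≤ R * 2 ^ j := by gcongr
    exact le_trans hRa h1
  have hmeas : ∀ j, volume (A j) = ENNReal.ofReal (7 * (a j)^3) * V := by
    intro j
    have hle : a j ≤ a (j+1) := (ha_mono (lt_add_one j)).le
    rw [hA]
    rw [measure_diff (ball_subset_ball hle) measurableSet_ball.nullMeasurableSet
        measure_ball_lt_top.ne,
      Measure.addHaar_ball volume 0 (ha_pos (j+1)).le,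
      Measure.addHaar_ball volume 0 (ha_pos j).le, finrank_euclideanSpace_fin,
      ← ENNReal.sub_mul (fun _ _ => hVtop), ← ENNReal.ofReal_sub _ (by positivity)]
    congr 2
    have : a (j+1) = 2 * a j := by dsimp only [a]; ring
    rw [this]; ring
  have hne : ENNReal.ofReal (7*c/8) * V ≠ 0 :=
    mul_ne_zero (ENNReal.ofReal_pos.2 (by positivity)).ne' hV0
  have hterm : ∀ j, ENNReal.ofReal (7*c/8) * V ≤
      ∫⁻ k in A j, ENNReal.ofReal (c * ‖k‖ ^ (-3 : ℝ)) := by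
    intro j
    have hrpow : ∀ y : ℝ, 0 < y → y ^ (-3:ℝ) = (y^3)⁻¹ := by
      intro y hy
      rw [show (-3:ℝ) = -((3:ℕ):ℝ) by norm_num, Real.rpow_neg hy.le, Real.rpow_natCast]
    have hb : ∀ x ∈ A j,
        ENNReal.ofReal (c * (a (j+1)) ^ (-3:ℝ)) ≤ ENNReal.ofReal (c * ‖x‖ ^ (-3:ℝ)) := by
      intro x hx
      obtain ⟨h1, h2⟩ := hAnorm j x hx
      have hx0 : 0 < ‖x‖ := lt_of_lt_of_le (ha_pos j) h1
      apply ENNReal.ofReal_le_ofReal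
      rw [hrpow _ hx0, hrpow _ (ha_pos (j+1))]
      gcongr
    have heq : ENNReal.ofReal (7*c/8) * V
        = ENNReal.ofReal (c * (a (j+1)) ^ (-3:ℝ)) * volume (A j) := by
      rw [hmeas j, ← mul_assoc, ← ENNReal.ofReal_mul (by positivity)]
      congr 2
      rw [hrpow _ (ha_pos (j+1)), show a (j+1) = 2 * a j by dsimp only [a]; ring]
      have := (ha_pos j).ne'
      field_simp
      ring
    calc ENNReal.ofReal (7*c/8) * V
        = ENNReal.ofReal (c * (a (j+1)) ^ (-3:ℝ)) * volume (A j) := heq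
      _ = ∫⁻ _ in A j, ENNReal.ofReal (c * (a (j+1)) ^ (-3:ℝ)) := by
          rw [setLIntegral_const]
      _ ≤ ∫⁻ k in A j, ENNReal.ofReal (c * ‖k‖ ^ (-3:ℝ)) :=
          setLIntegral_mono' (hAm j) hb
  refine top_le_iff.1 ?_
  calc (⊤ : ℝ≥0∞) = ∑' (_ : ℕ), ENNReal.ofReal (7*c/8) * V :=
        (ENNReal.tsum_const_eq_top_of_ne_zero hne).symm
    _ ≤ ∑' j, ∫⁻ k in A j, ENNReal.ofReal (c * ‖k‖ ^ (-3:ℝ)) :=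
        ENNReal.tsum_le_tsum hterm
    _ = ∫⁻ k in ⋃ j, A j, ENNReal.ofReal (c * ‖k‖ ^ (-3:ℝ)) :=
        (lintegral_iUnion hAm hdisj _).symm
    _ ≤ ∫⁻ k in {k : E3 | R ≤ ‖k‖}, ENNReal.ofReal (c * ‖k‖ ^ (-3:ℝ)) :=
        lintegral_mono_set hsub

/-- Divergence of the lower-bound integral: for `κ ≥ (2-D)/4` with `D = 1 - 2α`,
the integral `∫ |p-k|^{4κ} / ((1+|k|^α)²((p-k)² + |k|^β + m + C)²) dk` is infinite. -/
theorem lower_bound_integral_diverges (α β m κ C : ℝ)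
    (hα0 : 0 ≤ α) (hα : α < 3 / 2) (hβ : 0 < β) (hβ2 : β ≤ 2)
    (hm : 0 ≤ m) (hC : 0 < C) (hκ : (2 - (1 - 2 * α)) / 4 ≤ κ)
    (p : EuclideanSpace ℝ (Fin 3)) :
    ∫⁻ k : EuclideanSpace ℝ (Fin 3),
        ENNReal.ofReal (‖p - k‖ ^ (4 * κ) /
          ((1 + ‖k‖ ^ α) ^ 2 * (‖p - k‖ ^ 2 + ‖k‖ ^ β + m + C) ^ 2)) = ⊤ := by
  set cval : ℝ := (1/2) ^ (4*κ) / (4 * (5 + m + C)^2) with hcval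
  have hκ4 : (1:ℝ) + 2*α ≤ 4 * κ := by linarith
  have hκ0 : 0 ≤ 4 * κ := by linarith
  have hc : 0 < cval := by
    have : (0:ℝ) < (1/2:ℝ) ^ (4*κ) := Real.rpow_pos_of_pos (by norm_num) _
    positivity
  set R : ℝ := 1 + 2 * ‖p‖ with hRdef
  have hR : 1 ≤ R := by have := norm_nonneg p; simp only [hRdef]; linarith
  have hpt : ∀ k : E3, k ∈ {k : E3 | R ≤ ‖k‖} →
      ENNReal.ofReal (cval * ‖k‖ ^ (-3:ℝ)) ≤
      ENNReal.ofReal (‖p - k‖ ^ (4 * κ) /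
          ((1 + ‖k‖ ^ α) ^ 2 * (‖p - k‖ ^ 2 + ‖k‖ ^ β + m + C) ^ 2)) := by
    intro k hk
    simp only [Set.mem_setOf_eq] at hk
    apply ENNReal.ofReal_le_ofReal
    set t : ℝ := ‖k‖ with htdef
    set s : ℝ := ‖p - k‖ with hsdef
    have hpnn : 0 ≤ ‖p‖ := norm_nonneg p
    have ht1 : 1 ≤ t := by simp only [hRdef] at hk; linarith
    have ht0 : 0 < t := lt_of_lt_of_le one_pos ht1
    have hp2 : 2 * ‖p‖ ≤ t := by simp only [hRdef] at hk; linarith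
    have hs_lb : t / 2 ≤ s := by
      have h1 : t - ‖p‖ ≤ s := by
        have := norm_sub_norm_le k p
        rw [← norm_sub_rev p k] at this
        linarith
      linarith
    have hs_ub : s ≤ 2 * t := by
      have := norm_sub_le p k
      linarith
    have hs0 : 0 < s := lt_of_lt_of_le (by linarith) hs_lb
    have hX1 : 1 ≤ t ^ α := by
      have := Real.rpow_le_rpow_of_exponent_le ht1 hα0
      rwa [Real.rpow_zero] at this
    have hX0 : 0 < t ^ α := Real.rpow_pos_of_pos ht0 _
    have hDen1 : (1 + t ^ α) ^ 2 ≤ (2 * t ^ α) ^ 2 := by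
      apply pow_le_pow_left₀ (by positivity)
      linarith
    have ht2 : (1:ℝ) ≤ t ^ 2 := one_le_pow₀ ht1
    have hB : s ^ 2 + t ^ β + m + C ≤ (5 + m + C) * t ^ 2 := by
      have h1 : s ^ 2 ≤ (2*t) ^ 2 := pow_le_pow_left₀ hs0.le hs_ub 2
      have h2 : t ^ β ≤ t ^ 2 := by
        have := Real.rpow_le_rpow_of_exponent_le ht1 hβ2
        rwa [show (2:ℝ) = ((2:ℕ):ℝ) by norm_num, Real.rpow_natCast] at this
      nlinarith
    have hDen2 : (s ^ 2 + t ^ β + m + C) ^ 2 ≤ ((5 + m + C) * t ^ 2) ^ 2 := by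
      apply pow_le_pow_left₀ (by positivity) hB
    have hDpos : 0 < (1 + t ^ α) ^ 2 * (s ^ 2 + t ^ β + m + C) ^ 2 := by positivity
    have hD : (1 + t ^ α) ^ 2 * (s ^ 2 + t ^ β + m + C) ^ 2
        ≤ (2 * t ^ α) ^ 2 * ((5 + m + C) * t ^ 2) ^ 2 :=
      mul_le_mul hDen1 hDen2 (by positivity) (by positivity)
    have hN : (t/2) ^ (4*κ) ≤ s ^ (4*κ) :=
      Real.rpow_le_rpow (by positivity) hs_lb hκ0
    have step1 : (t/2) ^ (4*κ) / ((2 * t ^ α) ^ 2 * ((5 + m + C) * t ^ 2) ^ 2)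
        ≤ s ^ (4*κ) / ((1 + t ^ α) ^ 2 * (s ^ 2 + t ^ β + m + C) ^ 2) :=
      div_le_div₀ (Real.rpow_nonneg hs0.le _) hN hDpos hD
    have key : (t/2) ^ (4*κ) / ((2 * t ^ α) ^ 2 * ((5 + m + C) * t ^ 2) ^ 2)
        = cval * t ^ (4*κ - 2*α - 4) := by
      have h1 : (t/2) ^ (4*κ) = t ^ (4*κ) * (1/2:ℝ) ^ (4*κ) := by
        rw [show t/2 = t * (1/2) by ring, Real.mul_rpow ht0.le (by norm_num)]
      have h2 : (t ^ α) ^ 2 = t ^ (2*α) := by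
        rw [← Real.rpow_natCast (t ^ α) 2, ← Real.rpow_mul ht0.le]
        norm_num [mul_comm]
      have h3 : ((t:ℝ) ^ 2) ^ 2 = t ^ ((4:ℕ):ℝ) := by
        rw [← pow_mul, Real.rpow_natCast]
      have h4 : t ^ (4*κ - 2*α - 4) = t ^ (4*κ) / t ^ (2*α) / t ^ ((4:ℕ):ℝ) := by
        rw [← Real.rpow_sub ht0, ← Real.rpow_sub ht0]
        norm_num
      rw [h1, h4, hcval, ← h2, ← h3]
      have hT2 : (t ^ α) ≠ 0 := hX0.ne'
      have hT3 : (t:ℝ) ^ 2 ≠ 0 := by positivity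
      have hmC : (5 + m + C) ≠ 0 := by positivity
      field_simp
      ring
    calc cval * t ^ (-3:ℝ) ≤ cval * t ^ (4*κ - 2*α - 4) := by
          apply mul_le_mul_of_nonneg_left _ hc.le
          exact Real.rpow_le_rpow_of_exponent_le ht1 (by linarith)
      _ = (t/2) ^ (4*κ) / ((2 * t ^ α) ^ 2 * ((5 + m + C) * t ^ 2) ^ 2) := key.symm
      _ ≤ _ := step1
  refine top_le_iff.1 ?_
  calc (⊤ : ℝ≥0∞) = ∫⁻ k in {k : E3 | R ≤ ‖k‖},
        ENNReal.ofReal (cval * ‖k‖ ^ (-3:ℝ)) := (aux_div cval R hc hR).symm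
    _ ≤ ∫⁻ k in {k : E3 | R ≤ ‖k‖},
        ENNReal.ofReal (‖p - k‖ ^ (4 * κ) /
          ((1 + ‖k‖ ^ α) ^ 2 * (‖p - k‖ ^ 2 + ‖k‖ ^ β + m + C) ^ 2)) :=
        setLIntegral_mono' (isClosed_le continuous_const continuous_norm).measurableSet hpt
    _ ≤ _ := setLIntegral_le_lintegral _ _
end
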